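/- Let α ∈ (0,1), η ∈ (0,1/2), β ∈ (0,1). For all integers n, m ≥ 1 and 1 ≤ k ≤ m: if nk/m ≤ 1/(4α), then the supremum over P ∈ A_{n,m,k,α,β} of P_{Z~P}( TDP(P, BH*_{α(1−η)}) > TDP(P, BĤ_α) ) is at least 1 − β − 2α. -/

import Mathlib

open MeasureTheory ProbabilityTheory Finset

noncomputable section

namespace SemiSup

/-- The data space: a null training sample of size `n` and a test sample of size `m`. -/
abbrev Data (n m : ℕ) := (Fin n → ℝ) × (Fin m → ℝ)

/-- Conservative empirical p-value. -/
def phat (n : ℕ) (Y : Fin n → ℝ) (x : ℝ) : ℝ :=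
  (1 + (((Finset.univ : Finset (Fin n)).filter (fun j => Y j ≥ x)).card : ℝ)) / (n + 1)

/-- Unbiased empirical p-value. -/
def ptilde (n : ℕ) (Y : Fin n → ℝ) (x : ℝ) : ℝ :=
  (((Finset.univ : Finset (Fin n)).filter (fun j => Y j ≥ x)).card : ℝ) / n

/-- BH rejection number `k̂ = max {k ∈ {0,…,m} : p_(k) ≤ α k/m}`, using that
`p_(k) ≤ t` iff at least `k` of the p-values are `≤ t` (convention `p_(0) = 0`). -/
def BHk (m : ℕ) (α : ℝ) (p : Fin m → ℝ) : ℕ :=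
  sSup {k : ℕ | k ≤ m ∧
    k ≤ (((Finset.univ : Finset (Fin m)).filter (fun i => p i ≤ α * k / m)).card)}

/-- BH rejection set at level `α`. -/
def BHset (m : ℕ) (α : ℝ) (p : Fin m → ℝ) : Finset (Fin m) :=
  Finset.univ.filter (fun i => p i ≤ α * (BHk m α p) / m)

/-- The semi-supervised BH procedure (BH applied to the empirical p-values). -/
def BHhat (n m : ℕ) (α : ℝ) (z : Data n m) : Finset (Fin m) :=
  BHset m α (fun i => phat n z.1 (z.2 i))

/-- Upper-tail function of a null distribution. -/
def F0 (P0 : Measure ℝ) (t : ℝ) : ℝ := (P0 (Set.Ici t)).toReal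

/-- The oracle BH procedure (BH applied to the oracle p-values `F0 (X i)`). -/
def BHstar (n m : ℕ) (P0 : Measure ℝ) (α : ℝ) (z : Data n m) : Finset (Fin m) :=
  BHset m α (fun i => F0 P0 (z.2 i))

/-- False discovery proportion. -/
def FDP {m : ℕ} (H0 R : Finset (Fin m)) : ℝ :=
  ((R ∩ H0).card : ℝ) / max 1 (R.card : ℝ)

/-- False discovery rate. -/
def FDR {n m : ℕ} (P : Measure (Data n m)) (H0 : Finset (Fin m))
    (R : Data n m → Finset (Fin m)) : ℝ :=
  ∫ z, FDP H0 (R z) ∂P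

/-- True discovery proportion (`H1` is the set of false nulls). -/
def TDP {m : ℕ} (H1 R : Finset (Fin m)) : ℝ :=
  ((R ∩ H1).card : ℝ) / max 1 (H1.card : ℝ)

/-- The null family: training sample together with the test statistics of true nulls. -/
def nullVec {n m : ℕ} (H0 : Finset (Fin m)) (z : Data n m) :
    Fin n ⊕ {i : Fin m // i ∈ H0} → ℝ :=
  Sum.elim z.1 (fun i => z.2 i.1)

/-- Assumption (Exch): `(Y_1,…,Y_n, X_i, i ∈ H0)` is exchangeable and independent of
`(X_i, i ∉ H0)`. -/
def Exch {n m : ℕ} (P : Measure (Data n m)) (H0 : Finset (Fin m)) : Prop :=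
  (∀ σ : Equiv.Perm (Fin n ⊕ {i : Fin m // i ∈ H0}),
    P.map (fun z => nullVec H0 z ∘ σ) = P.map (nullVec H0)) ∧
  IndepFun (nullVec H0) (fun z (i : {i : Fin m // i ∉ H0}) => z.2 i.1) P

/-- Assumption (Indep): `(Y_1,…,Y_n, X_i, i ∈ H0)` i.i.d. with law `P0`, independent of
`(X_i, i ∉ H0)`. -/
def IndepAssumption {n m : ℕ} (P : Measure (Data n m)) (H0 : Finset (Fin m))
    (P0 : Measure ℝ) : Prop :=
  iIndepFun (fun i z => nullVec H0 z i) P ∧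
  (∀ i, P.map (fun z => nullVec H0 z i) = P0) ∧
  IndepFun (nullVec H0) (fun z (i : {i : Fin m // i ∉ H0}) => z.2 i.1) P

/-- The product distribution `P0^{⊗n} ⊗ P_1 ⊗ … ⊗ P_m` on the data space. -/
def prodP (n m : ℕ) (P0 : Measure ℝ) (Q : Fin m → Measure ℝ) : Measure (Data n m) :=
  (Measure.pi fun _ : Fin n => P0).prod (Measure.pi Q)

open scoped Classical in
/-- The set `H1(P)` of false nulls of a product distribution. -/
def H1set {m : ℕ} (P0 : Measure ℝ) (Q : Fin m → Measure ℝ) : Finset (Fin m) :=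
  Finset.univ.filter (fun i => Q i ≠ P0)

/-- Membership in the class `P_{n,m}` of product distributions with atomless
(continuous) components. -/
def memP (n m : ℕ) (P0 : Measure ℝ) (Q : Fin m → Measure ℝ) : Prop :=
  IsProbabilityMeasure P0 ∧ (∀ i, IsProbabilityMeasure (Q i)) ∧
  (∀ x : ℝ, P0 {x} = 0) ∧ (∀ i, ∀ x : ℝ, Q i {x} = 0)

/-- Membership in the class `A_{n,m}` (at least one false null). -/
def memA (n m : ℕ) (P0 : Measure ℝ) (Q : Fin m → Measure ℝ) : Prop :=
  memP n m P0 Q ∧ 1 ≤ (H1set P0 Q).card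

/-- Membership in the class `A_{n,m,k,α,β}` of distributions with at least `k`
detectable alternatives. -/
def memAk (n m k : ℕ) (α β : ℝ) (P0 : Measure ℝ) (Q : Fin m → Measure ℝ) : Prop :=
  memA n m P0 Q ∧ k ≤ (H1set P0 Q).card ∧
  ((prodP n m P0 Q)
      {z | ((H1set P0 Q) ∩ BHstar n m P0 (α / 2) z).card < k}).toReal ≤ β

/-- The constant `γ*(α,η)` of Proposition 3 (power upper bound). -/
def γstar (α η : ℝ) : ℝ := α⁻¹ * (η ^ 2)⁻¹ * (1 + η) * 28 * Real.log 2

/-- The constant `γ_*(α,η)` of Theorem 2 (lower bound). -/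
def γlow (α η : ℝ) : ℝ := (((1 + (α * (1 - η)) ^ (-(1 / 2) : ℝ)) ^ (3 : ℕ))⁻¹) / 64

lemma BHk_bddAbove (m : ℕ) (α : ℝ) (p : Fin m → ℝ) :
    BddAbove {k : ℕ | k ≤ m ∧
      k ≤ (((Finset.univ : Finset (Fin m)).filter (fun i => p i ≤ α * k / m)).card)} :=
  ⟨m, fun _ hx => hx.1⟩

lemma zero_mem_BHkSet (m : ℕ) (α : ℝ) (p : Fin m → ℝ) :
    0 ∈ {k : ℕ | k ≤ m ∧
      k ≤ (((Finset.univ : Finset (Fin m)).filter (fun i => p i ≤ α * k / m)).card)} :=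
  ⟨Nat.zero_le m, Nat.zero_le _⟩

lemma le_BHk {m k' : ℕ} {α : ℝ} {p : Fin m → ℝ} (h1 : k' ≤ m)
    (h2 : k' ≤ (((Finset.univ : Finset (Fin m)).filter
      (fun i => p i ≤ α * k' / m)).card)) : k' ≤ BHk m α p :=
  le_csSup (BHk_bddAbove m α p) ⟨h1, h2⟩

lemma card_filter_val_lt (m k : ℕ) (hkm : k ≤ m) :
    (((Finset.univ : Finset (Fin m)).filter (fun i : Fin m => (i : ℕ) < k)).card) = k := by
  have h : ((Finset.univ : Finset (Fin m)).filter (fun i : Fin m => (i : ℕ) < k)) =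
      (Finset.range k).attachFin
        (fun x hx => lt_of_lt_of_le (Finset.mem_range.mp hx) hkm) := by
    ext i
    simp [Finset.mem_attachFin]
  rw [h, Finset.card_attachFin, Finset.card_range]

lemma k_le_card_BHset {m k : ℕ} (hkm : k ≤ m) {α'' : ℝ} (h0 : 0 ≤ α'') {p : Fin m → ℝ}
    (hp : ∀ i : Fin m, (i : ℕ) < k → p i = 0) : k ≤ (BHset m α'' p).card := by
  have hsub : ((Finset.univ : Finset (Fin m)).filter (fun i : Fin m => (i : ℕ) < k)) ⊆
      BHset m α'' p := by
    intro i hi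
    rw [Finset.mem_filter] at hi
    simp only [BHset, Finset.mem_filter]
    refine ⟨Finset.mem_univ i, ?_⟩
    rw [hp i hi.2]
    positivity
  calc k = _ := (card_filter_val_lt m k hkm).symm
    _ ≤ _ := Finset.card_le_card hsub

lemma BHset_eq_empty {n m k : ℕ} (hm : 1 ≤ m) (hkm : k ≤ m) {α : ℝ}
    (hα0 : 0 < α) (hα1 : α < 1)
    (hsmall : α * k / m < 1 / (n + 1)) {p : Fin m → ℝ}
    (hph : ∀ i : Fin m, (i : ℕ) < k → p i = 1 / (n + 1))
    (hpl : ∀ i : Fin m, ¬ (i : ℕ) < k → p i = 1) :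
    BHset m α p = ∅ := by
  have hm0 : (0 : ℝ) < m := by exact_mod_cast hm
  have hn1 : (0 : ℝ) < (n : ℝ) + 1 := by positivity
  have hS : {k' : ℕ | k' ≤ m ∧
      k' ≤ (((Finset.univ : Finset (Fin m)).filter (fun i => p i ≤ α * k' / m)).card)}
      = {0} := by
    apply Set.eq_singleton_iff_unique_mem.mpr
    refine ⟨zero_mem_BHkSet m α p, ?_⟩
    intro k' hk'
    by_contra hne
    have hk'1 : 1 ≤ k' := Nat.one_le_iff_ne_zero.mpr hne
    have hk'm : k' ≤ m := hk'.1
    have hsub : ((Finset.univ : Finset (Fin m)).filter (fun i => p i ≤ α * k' / m)) ⊆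
        ((Finset.univ : Finset (Fin m)).filter (fun i : Fin m => (i : ℕ) < k)) := by
      intro i hi
      rw [Finset.mem_filter] at hi ⊢
      refine ⟨Finset.mem_univ i, ?_⟩
      by_contra hik
      rw [hpl i hik] at hi
      have hthresh1 : α * k' / m < 1 := by
        rw [div_lt_one hm0]
        have h1 : α * k' < 1 * k' :=
          mul_lt_mul_of_pos_right hα1 (by exact_mod_cast hk'1)
        have h2 : (k' : ℝ) ≤ m := by exact_mod_cast hk'm
        nlinarith
      linarith [hi.2]
    have hcount := hk'.2
    have hk'k : k' ≤ k := by
      calc k' ≤ _ := hcount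
        _ ≤ _ := Finset.card_le_card hsub
        _ = k := card_filter_val_lt m k hkm
    have hempty : ((Finset.univ : Finset (Fin m)).filter
        (fun i => p i ≤ α * k' / m)) = ∅ := by
      apply Finset.filter_false_of_mem
      intro i _
      by_cases hik : (i : ℕ) < k
      · rw [hph i hik]
        push_neg
        calc α * (k' : ℝ) / m ≤ α * (k : ℝ) / m := by
              have hc : (k' : ℝ) ≤ k := by exact_mod_cast hk'k
              gcongr
          _ < 1 / ((n : ℝ) + 1) := hsmall
      · rw [hpl i hik]
        push_neg
        have hthresh1 : α * k' / m < 1 := by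
          rw [div_lt_one hm0]
          have h1 : α * k' < 1 * k' :=
            mul_lt_mul_of_pos_right hα1 (by exact_mod_cast hk'1)
          have h2 : (k' : ℝ) ≤ m := by exact_mod_cast hk'm
          nlinarith
        linarith
    rw [hempty] at hcount
    simp at hcount
    omega
  have hBHk : BHk m α p = 0 := by
    rw [BHk, hS]
    exact csSup_singleton 0
  simp only [BHset, hBHk]
  apply Finset.filter_false_of_mem
  intro i _
  push_neg
  by_cases hik : (i : ℕ) < k
  · rw [hph i hik]
    push_cast
    rw [mul_zero, zero_div]
    positivity
  · rw [hpl i hik]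
    push_cast
    rw [mul_zero, zero_div]
    norm_num

/-! ### Auxiliary constructions for the lower-bound proof -/

/-- The null distribution used in the construction: uniform on `(0,1)`. -/
def nullUnif : Measure ℝ := volume.restrict (Set.Ioo 0 1)

/-- The alternative distributions: the first `k` are uniform on `(2,3)` (far right tail,
oracle p-value `0`), the rest uniform on `(-1,0)` (p-value `1`). There are no true nulls. -/
def altQ (m k : ℕ) : Fin m → Measure ℝ := fun i =>
  if (i : ℕ) < k then volume.restrict (Set.Ioo 2 3) else volume.restrict (Set.Ioo (-1) 0)

lemma isProb_restrict_Ioo {a b : ℝ} (h : b - a = 1) :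
    IsProbabilityMeasure (volume.restrict (Set.Ioo a b)) :=
  ⟨by rw [Measure.restrict_apply_univ, Real.volume_Ioo, h, ENNReal.ofReal_one]⟩

lemma restrict_Ioo_singleton (a b x : ℝ) : (volume.restrict (Set.Ioo a b)) {x} = 0 := by
  rw [Measure.restrict_apply (measurableSet_singleton x)]
  refine le_antisymm (le_trans (measure_mono Set.inter_subset_left) ?_) zero_le
  simp [Real.volume_singleton]

lemma restrict_Ioo_self (a b : ℝ) :
    (volume.restrict (Set.Ioo a b)) (Set.Ioo a b) = ENNReal.ofReal (b - a) := by
  rw [Measure.restrict_apply measurableSet_Ioo, Set.inter_self, Real.volume_Ioo]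

lemma F0_nullUnif_of_one_lt {t : ℝ} (ht : 1 < t) : F0 nullUnif t = 0 := by
  rw [F0, nullUnif, Measure.restrict_apply measurableSet_Ici]
  have h : Set.Ici t ∩ Set.Ioo (0:ℝ) 1 = ∅ := by
    ext x
    simp only [Set.mem_inter_iff, Set.mem_Ici, Set.mem_Ioo, Set.mem_empty_iff_false,
      iff_false, not_and]
    intro h1 h2
    linarith
  rw [h]
  simp

lemma F0_nullUnif_of_neg {t : ℝ} (ht : t < 0) : F0 nullUnif t = 1 := by
  rw [F0, nullUnif, Measure.restrict_apply measurableSet_Ici]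
  have h : Set.Ici t ∩ Set.Ioo (0:ℝ) 1 = Set.Ioo 0 1 :=
    Set.inter_eq_right.mpr fun x hx => le_of_lt (lt_trans ht hx.1)
  rw [h, Real.volume_Ioo]
  norm_num

lemma phat_of_all_lt {n : ℕ} {Y : Fin n → ℝ} {x : ℝ} (h : ∀ j, Y j < x) :
    phat n Y x = 1 / (n + 1) := by
  rw [phat]
  have he : (Finset.univ : Finset (Fin n)).filter (fun j => Y j ≥ x) = ∅ :=
    Finset.filter_false_of_mem (fun j _ => not_le.mpr (h j))
  rw [he]
  simp

lemma phat_of_all_ge {n : ℕ} {Y : Fin n → ℝ} {x : ℝ} (h : ∀ j, x ≤ Y j) :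
    phat n Y x = 1 := by
  rw [phat]
  have he : (Finset.univ : Finset (Fin n)).filter (fun j => Y j ≥ x) = Finset.univ :=
    Finset.filter_true_of_mem (fun j _ => h j)
  have hne : (n : ℝ) + 1 ≠ 0 := by positivity
  rw [he]
  rw [Finset.card_univ, Fintype.card_fin]
  field_simp
  ring

/-- On the good event, the oracle BH procedure at any nonnegative level rejects at least
the `k` strong alternatives. -/
lemma star_card {n m k : ℕ} (hkm : k ≤ m) {α'' : ℝ} (h0 : 0 ≤ α'') {z : Data n m}
    (hXh : ∀ i : Fin m, (i : ℕ) < k → 1 < z.2 i) :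
    k ≤ (BHstar n m nullUnif α'' z).card := by
  rw [BHstar]
  exact k_le_card_BHset hkm h0 (fun i hi => F0_nullUnif_of_one_lt (hXh i hi))

/-- On the good event, the semi-supervised BH procedure rejects nothing. -/
lemma hat_empty {n m k : ℕ} (hm : 1 ≤ m) (hkm : k ≤ m) {α : ℝ}
    (hα0 : 0 < α) (hα1 : α < 1) (hsmall : α * k / m < 1 / (n + 1)) {z : Data n m}
    (hY : ∀ j, z.1 j ∈ Set.Ioo (0:ℝ) 1)
    (hXh : ∀ i : Fin m, (i : ℕ) < k → 2 < z.2 i)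
    (hXl : ∀ i : Fin m, ¬(i : ℕ) < k → z.2 i < 0) :
    BHhat n m α z = ∅ := by
  rw [BHhat]
  refine BHset_eq_empty hm hkm hα0 hα1 hsmall ?_ ?_
  · intro i hi
    exact phat_of_all_lt (fun j => lt_trans (hY j).2 (lt_trans one_lt_two (hXh i hi)))
  · intro i hi
    exact phat_of_all_ge (fun j => le_of_lt (lt_trans (hXl i hi) (hY j).1))

/-- **Proposition 5(ii).** Let `α ∈ (0,1)`, `η ∈ (0,1/2)`, `β ∈ (0,1)`. For all
`n, m ≥ 1` and `1 ≤ k ≤ m`, if `nk/m ≤ 1/(4α)`, then the supremum over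
`P ∈ A_{n,m,k,α,β}` of `P(TDP(P, BH*_{α(1−η)}) > TDP(P, BĤ_α))` is at least
`1 − β − 2α`. -/
theorem power_lower_bound_detectable
    (α η β : ℝ) (hα : α ∈ Set.Ioo (0 : ℝ) 1) (hη : η ∈ Set.Ioo (0 : ℝ) (1 / 2))
    (hβ : β ∈ Set.Ioo (0 : ℝ) 1)
    (n m k : ℕ) (hn : 1 ≤ n) (hm : 1 ≤ m) (hk : 1 ≤ k) (hkm : k ≤ m)
    (hnm : (n : ℝ) * k / m ≤ 1 / (4 * α)) :
    sSup {x : ℝ | ∃ (P0 : Measure ℝ) (Q : Fin m → Measure ℝ), memAk n m k α β P0 Q ∧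
        x = ((prodP n m P0 Q)
            {z | TDP (H1set P0 Q) (BHstar n m P0 (α * (1 - η)) z)
                  > TDP (H1set P0 Q) (BHhat n m α z)}).toReal}
      ≥ 1 - β - 2 * α := by
  obtain ⟨hα0, hα1⟩ := hα
  obtain ⟨hβ0, _⟩ := hβ
  obtain ⟨hη0, hη1⟩ := hη
  have hm0 : (0:ℝ) < m := by exact_mod_cast hm
  have hn1 : (1:ℝ) ≤ n := by exact_mod_cast hn
  have hk1 : (1:ℝ) ≤ k := by exact_mod_cast hk
  -- the key smallness inequality : `α k / m < 1/(n+1)`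
  have hcross : (n:ℝ) * k * (4 * α) ≤ m * 1 := by
    rw [div_le_div_iff₀ hm0 (by positivity)] at hnm
    linarith
  have hsmall : α * (k:ℝ) / m < 1 / ((n:ℝ) + 1) := by
    rw [div_lt_div_iff₀ hm0 (by positivity)]
    have hαk : (0:ℝ) < α * k := by positivity
    nlinarith [hαk, hn1, hcross]
  -- instances for the constructed measures
  haveI hP0prob : IsProbabilityMeasure nullUnif := isProb_restrict_Ioo (by norm_num)
  haveI hQprob : ∀ i : Fin m, IsProbabilityMeasure (altQ m k i) := fun i => by
    unfold altQ
    split_ifs <;> exact isProb_restrict_Ioo (by norm_num)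
  haveI hPprob : IsProbabilityMeasure (prodP n m nullUnif (altQ m k)) := by
    unfold prodP; infer_instance
  -- the alternatives differ from the null
  have hQneP0 : ∀ i : Fin m, altQ m k i ≠ nullUnif := by
    intro i h
    have h23 : Set.Ioo (2:ℝ) 3 ∩ Set.Ioo (0:ℝ) 1 = ∅ := by
      ext x
      simp only [Set.mem_inter_iff, Set.mem_Ioo, Set.mem_empty_iff_false, iff_false, not_and]
      intro h1 _ _
      linarith
    have hm10 : Set.Ioo (-1:ℝ) 0 ∩ Set.Ioo (0:ℝ) 1 = ∅ := by
      ext x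
      simp only [Set.mem_inter_iff, Set.mem_Ioo, Set.mem_empty_iff_false, iff_false, not_and]
      intro _ h2 h3
      linarith
    unfold altQ at h
    split_ifs at h with hik
    · have h2 := congrArg (fun μ : Measure ℝ => μ (Set.Ioo 2 3)) h
      simp only [nullUnif] at h2
      rw [restrict_Ioo_self, Measure.restrict_apply measurableSet_Ioo, h23] at h2
      norm_num at h2
    · have h2 := congrArg (fun μ : Measure ℝ => μ (Set.Ioo (-1) 0)) h
      simp only [nullUnif] at h2
      rw [restrict_Ioo_self, Measure.restrict_apply measurableSet_Ioo, hm10] at h2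
      norm_num at h2
  have hH1 : H1set nullUnif (altQ m k) = Finset.univ := by
    classical
    rw [H1set]
    exact Finset.filter_true_of_mem fun i _ => hQneP0 i
  have hH1card : (H1set nullUnif (altQ m k)).card = m := by
    rw [hH1, Finset.card_univ, Fintype.card_fin]
  -- the good event
  set E : Set (Data n m) :=
    (Set.univ.pi fun _ : Fin n => Set.Ioo (0:ℝ) 1) ×ˢ
      (Set.univ.pi fun i : Fin m =>
        if (i:ℕ) < k then Set.Ioo (2:ℝ) 3 else Set.Ioo (-1:ℝ) 0) with hEdef
  have hmeasE : MeasurableSet E := by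
    refine MeasurableSet.prod (MeasurableSet.univ_pi fun _ => measurableSet_Ioo)
      (MeasurableSet.univ_pi fun i => ?_)
    split_ifs <;> exact measurableSet_Ioo
  have hμE : prodP n m nullUnif (altQ m k) E = 1 := by
    rw [hEdef, prodP, Measure.prod_prod, Measure.pi_pi, Measure.pi_pi]
    have hA : ∀ j : Fin n, j ∈ Finset.univ → nullUnif (Set.Ioo (0:ℝ) 1) = 1 := by
      intro j _
      rw [nullUnif, restrict_Ioo_self]
      norm_num
    have hB : ∀ i : Fin m, i ∈ Finset.univ →
        altQ m k i (if (i:ℕ) < k then Set.Ioo (2:ℝ) 3 else Set.Ioo (-1:ℝ) 0) = 1 := by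
      intro i _
      unfold altQ
      split_ifs <;> (rw [restrict_Ioo_self]; norm_num)
    rw [Finset.prod_eq_one hA, Finset.prod_eq_one hB, one_mul]
  -- extracting pointwise information from membership in `E`
  have hEinfo : ∀ z : Data n m, z ∈ E →
      (∀ j, z.1 j ∈ Set.Ioo (0:ℝ) 1) ∧
      (∀ i : Fin m, (i:ℕ) < k → 2 < z.2 i) ∧
      (∀ i : Fin m, ¬(i:ℕ) < k → z.2 i < 0) := by
    intro z hz
    rw [hEdef, Set.mem_prod] at hz
    have h1 := Set.mem_univ_pi.mp hz.1
    have h2 := Set.mem_univ_pi.mp hz.2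
    refine ⟨h1, ?_, ?_⟩
    · intro i hik
      have := h2 i
      rw [if_pos hik] at this
      exact this.1
    · intro i hik
      have := h2 i
      rw [if_neg hik] at this
      exact this.2
  -- membership in the class `A_{n,m,k,α,β}`
  have hmemAk : memAk n m k α β nullUnif (altQ m k) := by
    refine ⟨⟨⟨hP0prob, hQprob, ?_, ?_⟩, ?_⟩, ?_, ?_⟩
    · exact fun x => restrict_Ioo_singleton 0 1 x
    · intro i x
      unfold altQ
      split_ifs <;> exact restrict_Ioo_singleton _ _ x
    · rw [hH1card]; exact hm
    · rw [hH1card]; exact hkm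
    · -- the oracle BH at level α/2 finds all k strong alternatives a.s.
      have hsub : {z : Data n m |
          ((H1set nullUnif (altQ m k)) ∩ BHstar n m nullUnif (α/2) z).card < k} ⊆ Eᶜ := by
        intro z hz hzE
        obtain ⟨_, hXh, _⟩ := hEinfo z hzE
        rw [Set.mem_setOf_eq, hH1, Finset.univ_inter] at hz
        exact absurd hz (not_lt.mpr (star_card hkm (by positivity)
          (fun i hik => lt_trans one_lt_two (hXh i hik))))
      have hcompl : prodP n m nullUnif (altQ m k) Eᶜ = 0 := by
        rw [measure_compl hmeasE (measure_ne_top _ _), hμE, measure_univ, tsub_self]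
      have hle := measure_mono (μ := prodP n m nullUnif (altQ m k)) hsub
      rw [hcompl] at hle
      rw [le_antisymm hle zero_le]
      simpa using hβ0.le
  -- the target event contains `E`
  have htarget : E ⊆ {z : Data n m |
      TDP (H1set nullUnif (altQ m k)) (BHstar n m nullUnif (α * (1 - η)) z)
        > TDP (H1set nullUnif (altQ m k)) (BHhat n m α z)} := by
    intro z hz
    obtain ⟨hY, hXh, hXl⟩ := hEinfo z hz
    have hhat : BHhat n m α z = ∅ :=
      hat_empty hm hkm hα0 hα1 hsmall hY hXh hXl
    have hstar : k ≤ (BHstar n m nullUnif (α * (1 - η)) z).card :=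
      star_card hkm (mul_nonneg hα0.le (by linarith)) (fun i hik => lt_trans one_lt_two (hXh i hik))
    rw [Set.mem_setOf_eq, hH1, hhat]
    have hTDP0 : TDP (Finset.univ : Finset (Fin m)) (∅ : Finset (Fin m)) = 0 := by
      simp [TDP]
    rw [hTDP0, TDP, Finset.inter_univ]
    apply div_pos
    · have : (1:ℝ) ≤ ((BHstar n m nullUnif (α * (1 - η)) z).card : ℝ) := by
        exact_mod_cast le_trans hk hstar
      linarith
    · exact lt_max_of_lt_left one_pos
  -- probability of the target event is 1
  have hμT : prodP n m nullUnif (altQ m k)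
      {z : Data n m |
        TDP (H1set nullUnif (altQ m k)) (BHstar n m nullUnif (α * (1 - η)) z)
          > TDP (H1set nullUnif (altQ m k)) (BHhat n m α z)} = 1 := by
    refine le_antisymm prob_le_one ?_
    calc (1:ENNReal) = _ := hμE.symm
      _ ≤ _ := measure_mono htarget
  -- conclude
  have hbdd : BddAbove {x : ℝ | ∃ (P0 : Measure ℝ) (Q : Fin m → Measure ℝ),
      memAk n m k α β P0 Q ∧
      x = ((prodP n m P0 Q)
          {z | TDP (H1set P0 Q) (BHstar n m P0 (α * (1 - η)) z)
                > TDP (H1set P0 Q) (BHhat n m α z)}).toReal} := by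
    refine ⟨1, ?_⟩
    rintro x ⟨P0, Q, hmem, rfl⟩
    haveI : IsProbabilityMeasure P0 := hmem.1.1.1
    haveI : ∀ i, IsProbabilityMeasure (Q i) := hmem.1.1.2.1
    haveI : IsProbabilityMeasure (prodP n m P0 Q) := by unfold prodP; infer_instance
    have h1 := prob_le_one (μ := prodP n m P0 Q)
      (s := {z | TDP (H1set P0 Q) (BHstar n m P0 (α * (1 - η)) z)
                > TDP (H1set P0 Q) (BHhat n m α z)})
    calc _ ≤ (1:ENNReal).toReal := ENNReal.toReal_mono ENNReal.one_ne_top h1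
      _ = 1 := ENNReal.toReal_one
  have hmem1 : (1:ℝ) ∈ {x : ℝ | ∃ (P0 : Measure ℝ) (Q : Fin m → Measure ℝ),
      memAk n m k α β P0 Q ∧
      x = ((prodP n m P0 Q)
          {z | TDP (H1set P0 Q) (BHstar n m P0 (α * (1 - η)) z)
                > TDP (H1set P0 Q) (BHhat n m α z)}).toReal} :=
    ⟨nullUnif, altQ m k, hmemAk, by rw [hμT, ENNReal.toReal_one]⟩
  have hfin := le_csSup hbdd hmem1
  linarith

end SemiSup
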